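/- Let Y_0, …, Y_{n−1} be independent real random variables, where Y_j is exponentially distributed with mean μ_j > 0 (density (1/μ_j)·e^{−x/μ_j} on [0,∞)). Let μ := Σ_j μ_j, let μ_max := max_j μ_j, and let Y := Σ_j Y_j. Then for every δ > 0, Pr[Y ≥ (1+δ)·μ] ≤ exp(−(1 + δ − ln 4)·μ / (2·μ_max)). -/

import Mathlib

open MeasureTheory ProbabilityTheory Real Set Filter

section Aux

lemma aux_integral_exp_neg_mul_Ioi {b : ℝ} (hb : 0 < b) :
    ∫ x in Set.Ioi (0:ℝ), Real.exp (-(b * x)) = 1 / b := by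
  have hderiv : ∀ x ∈ Set.Ici (0:ℝ),
      HasDerivAt (fun x => -Real.exp (-(b * x)) / b) (Real.exp (-(b * x))) x := by
    intro x _
    have h1 : HasDerivAt (fun x : ℝ => -(b * x)) (-b) x := by
      exact (((hasDerivAt_id x).const_mul b).neg).congr_deriv (by simp)
    have h2 := (h1.exp.neg).div_const b
    convert h2 using 1
    · rfl
    · rfl
    · rfl
    · rw [eq_div_iff hb.ne']; ring
  have hint : MeasureTheory.IntegrableOn (fun x => Real.exp (-(b * x))) (Set.Ioi 0) := by
    simpa [neg_mul] using exp_neg_integrableOn_Ioi 0 hb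
  have htend : Tendsto (fun x => -Real.exp (-(b * x)) / b) atTop (nhds 0) := by
    have : Tendsto (fun x : ℝ => -(b * x)) atTop atBot := by
      apply Filter.tendsto_neg_atBot_iff.mpr
      exact Filter.Tendsto.const_mul_atTop hb tendsto_id
    have := (Real.tendsto_exp_atBot.comp this).neg.div_const b
    simpa using this
  have := MeasureTheory.integral_Ioi_of_hasDerivAt_of_tendsto' hderiv hint htend
  rw [this]
  simp [neg_div]

lemma aux_exponentialPDFReal_eq (r x : ℝ) :
    exponentialPDFReal r x = if 0 ≤ x then r * Real.exp (-(r * x)) else 0 := by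
  rw [exponentialPDFReal, gammaPDFReal]
  simp only [rpow_one, Real.Gamma_one, div_one, sub_self, rpow_zero, mul_one]

lemma aux_indicator {r : ℝ} (hr : 0 < r) (t : ℝ) :
    (fun x => (exponentialPDFReal r x).toNNReal • Real.exp (t * x))
      = Set.indicator (Set.Ici 0) (fun x => r * Real.exp (-((r - t) * x))) := by
  funext x
  rw [aux_exponentialPDFReal_eq]
  by_cases hx : 0 ≤ x
  · simp only [if_pos hx, Set.indicator_of_mem (Set.mem_Ici.mpr hx), NNReal.smul_def]
    rw [Real.coe_toNNReal _ (by positivity), smul_eq_mul, mul_assoc, ← Real.exp_add]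
    congr 1
    ring_nf
  · simp [if_neg hx, Set.indicator_of_notMem (fun h => hx (Set.mem_Ici.mp h))]

lemma aux_expMeasure_withDensity (r : ℝ) :
    expMeasure r = MeasureTheory.volume.withDensity
      (fun x => ((exponentialPDFReal r x).toNNReal : ENNReal)) := by
  rfl

lemma aux_integrable_exp_expMeasure {r t : ℝ} (hr : 0 < r) (ht : t < r) :
    Integrable (fun x => Real.exp (t * x)) (expMeasure r) := by
  rw [aux_expMeasure_withDensity]
  refine (integrable_withDensity_iff_integrable_smul (E := ℝ)
    ((measurable_exponentialPDFReal r).real_toNNReal)).mpr ?_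
  rw [aux_indicator hr]
  rw [integrable_indicator_iff measurableSet_Ici, integrableOn_Ici_iff_integrableOn_Ioi]
  exact ((exp_neg_integrableOn_Ioi 0 (by linarith : (0:ℝ) < r - t)).congr_fun
    (fun x _ => by rw [neg_mul]) measurableSet_Ioi).const_mul r

lemma aux_integral_exp_expMeasure {r t : ℝ} (hr : 0 < r) (ht : t < r) :
    ∫ x, Real.exp (t * x) ∂(expMeasure r) = r / (r - t) := by
  rw [aux_expMeasure_withDensity,
    integral_withDensity_eq_integral_smul ((measurable_exponentialPDFReal r).real_toNNReal),
    aux_indicator hr, MeasureTheory.integral_indicator measurableSet_Ici,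
    MeasureTheory.integral_Ici_eq_integral_Ioi, MeasureTheory.integral_const_mul,
    aux_integral_exp_neg_mul_Ioi (by linarith)]
  field_simp

lemma aux_key {s : ℝ} (hs0 : 0 ≤ s) (hs : s ≤ 1/2) :
    Real.exp (-s * Real.log 4) ≤ 1 - s := by
  have h4 : Real.log 4 = 2 * Real.log 2 := by
    rw [show (4:ℝ) = 2^2 by norm_num, Real.log_pow]; push_cast; ring
  have hc := convexOn_exp.2 (Set.mem_univ (0:ℝ)) (Set.mem_univ (-Real.log 2))
    (by linarith : (0:ℝ) ≤ 1 - 2*s) (by linarith : (0:ℝ) ≤ 2*s) (by ring)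
  simp only [smul_eq_mul, Real.exp_zero, mul_zero, zero_add] at hc
  have he : Real.exp (-Real.log 2) = 1/2 := by
    rw [Real.exp_neg, Real.exp_log two_pos]; norm_num
  rw [he] at hc
  calc Real.exp (-s * Real.log 4) = Real.exp (2*s*(-Real.log 2)) := by
        congr 1; rw [h4]; ring
    _ ≤ (1-2*s)*1 + 2*s*(1/2) := by simpa using hc
    _ = 1 - s := by ring


end Aux


/-- Concentration bound for a sum of independent exponential random variables:
if `Y j` is exponential with mean `μ j > 0`, `μ = Σ_j μ j`, `μmax = max_j μ j`, then
for every `δ > 0`, `Pr[Σ_j Y j ≥ (1+δ)μ] ≤ exp(-(1 + δ - ln 4)·μ / (2·μmax))`. -/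
theorem concentration_sum_exponentials {Ω : Type*} [MeasureSpace Ω]
    [IsProbabilityMeasure (ℙ : Measure Ω)]
    (n : ℕ) (hn : 0 < n)
    (Y : Fin n → Ω → ℝ) (hY : ∀ j, Measurable (Y j))
    (hind : iIndepFun Y ℙ)
    (μ : Fin n → ℝ) (hμ : ∀ j, 0 < μ j)
    (hlaw : ∀ j, Measure.map (Y j) ℙ = expMeasure (1 / μ j))
    (δ : ℝ) (hδ : 0 < δ) :
    (ℙ {ω | (1 + δ) * (∑ j, μ j) ≤ ∑ j, Y j ω}).toReal ≤
      Real.exp (-((1 + δ - Real.log 4) * (∑ j, μ j) /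
        (2 * Finset.univ.sup'
          (Finset.univ_nonempty_iff.mpr (Fin.pos_iff_nonempty.mp hn)) μ))) := by
  set M := Finset.univ.sup'
      (Finset.univ_nonempty_iff.mpr (Fin.pos_iff_nonempty.mp hn)) μ with hMdef
  have hμM : ∀ j, μ j ≤ M := fun j => Finset.le_sup' μ (Finset.mem_univ j)
  have hM : 0 < M := lt_of_lt_of_le (hμ ⟨0, hn⟩) (hμM ⟨0, hn⟩)
  set t : ℝ := 1 / (2 * M) with htdef
  have ht : 0 < t := by positivity
  have htr : ∀ j, t < 1 / μ j := by
    intro j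
    have h1 : t ≤ 1 / (2 * μ j) :=
      one_div_le_one_div_of_le (by linarith [hμ j]) (by linarith [hμM j])
    have h2 : 1 / (2 * μ j) < 1 / μ j :=
      one_div_lt_one_div_of_lt (hμ j) (by linarith [hμ j])
    linarith
  have hInt : ∀ j, Integrable (fun ω => Real.exp (t * Y j ω)) ℙ := by
    intro j
    have hμj := hμ j
    have h := aux_integrable_exp_expMeasure (r := 1 / μ j) (by positivity) (htr j)
    rw [← hlaw j] at h
    exact
      (integrable_map_measure h.aestronglyMeasurable (hY j).aemeasurable).mp h
  have hmgf : ∀ j, mgf (Y j) ℙ t = (1 / μ j) / (1 / μ j - t) := by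
    intro j
    have hμj := hμ j
    have h := integral_map (μ := (ℙ : Measure Ω)) (φ := Y j) (f := fun x => Real.exp (t * x))
      (hY j).aemeasurable
      (((measurable_id.const_mul t).exp).aestronglyMeasurable)
    rw [hlaw j, aux_integral_exp_expMeasure (by positivity) (htr j)] at h
    rw [mgf, ← h]
  have hsum : ∀ j, t * μ j ≤ 1 / 2 := by
    intro j
    have : t * μ j ≤ t * M := by
      apply mul_le_mul_of_nonneg_left (hμM j) ht.le
    have htM : t * M = 1 / 2 := by
      rw [htdef]; field_simp
    linarith
  have hbound : ∀ j, mgf (Y j) ℙ t ≤ Real.exp (t * μ j * Real.log 4) := by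
    intro j
    rw [hmgf j]
    have hμj := hμ j
    have heq : (1 / μ j) / (1 / μ j - t) = 1 / (1 - t * μ j) := by
      rw [div_eq_div_iff]
      · field_simp
      · linarith [htr j]
      · have := hsum j; linarith
    rw [heq]
    have h1 : Real.exp (-(t * μ j) * Real.log 4) ≤ 1 - t * μ j :=
      aux_key (by positivity) (hsum j)
    have h2 : (0:ℝ) < 1 - t * μ j := lt_of_lt_of_le (Real.exp_pos _) h1
    rw [div_le_iff₀ h2]
    calc (1:ℝ) = Real.exp (t * μ j * Real.log 4) * Real.exp (-(t * μ j) * Real.log 4) := by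
          rw [← Real.exp_add, show t * μ j * Real.log 4 + -(t * μ j) * Real.log 4 = 0 by ring,
            Real.exp_zero]
      _ ≤ Real.exp (t * μ j * Real.log 4) * (1 - t * μ j) :=
          mul_le_mul_of_nonneg_left h1 (Real.exp_nonneg _)
  have hIntSum : Integrable (fun ω => Real.exp (t * ∑ j, Y j ω)) ℙ := by
    have := hind.integrable_exp_mul_sum hY (fun i _ => hInt i) (s := Finset.univ)
    simpa [Finset.sum_apply] using this
  have hcher := measure_ge_le_exp_mul_mgf (μ := ℙ) (X := fun ω => ∑ j, Y j ω)
    ((1 + δ) * ∑ j, μ j) ht.le hIntSum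
  have hmgfsum : mgf (fun ω => ∑ j, Y j ω) ℙ t = ∏ j, mgf (Y j) ℙ t := by
    rw [← hind.mgf_sum hY Finset.univ]
    congr 1
    funext ω
    simp [Finset.sum_apply]
  rw [hmgfsum] at hcher
  refine hcher.trans ?_
  calc Real.exp (-t * ((1 + δ) * ∑ j, μ j)) * ∏ j, mgf (Y j) ℙ t
      ≤ Real.exp (-t * ((1 + δ) * ∑ j, μ j)) * ∏ j, Real.exp (t * μ j * Real.log 4) := by
        apply mul_le_mul_of_nonneg_left _ (Real.exp_nonneg _)
        exact Finset.prod_le_prod (fun j _ => mgf_nonneg) (fun j _ => hbound j)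
    _ = Real.exp (-t * ((1 + δ) * ∑ j, μ j) + ∑ j, t * μ j * Real.log 4) := by
        rw [Real.exp_add, Real.exp_sum]
    _ = Real.exp (-((1 + δ - Real.log 4) * (∑ j, μ j) / (2 * M))) := by
        congr 1
        rw [← Finset.sum_mul, ← Finset.mul_sum, htdef]
        field_simp
        ring
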